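/- Converse bound for classical SMDC along an arbitrary supporting hyperplane: Let L ≥ 1, let λ = (λ_1,…,λ_L) with all λ_l ≥ 0, let S_1,…,S_L be mutually independent random variables each taking values in a finite set, let X_1,…,X_L be random variables jointly distributed with them (each taking values in a finite set), and let δ_1,…,δ_L ≥ 0. Suppose that for every α ∈ {1,…,L} and every U ∈ Ω_L^{(α)}, H(S_1,…,S_α | X_U) ≤ δ_α. Then ∑_{l=1}^{L} λ_l H(X_l) ≥ ∑_{α=1}^{L} f_α(λ) H(S_α) − ∑_{α=1}^{L} f_α(λ) δ_α. -/

import Mathlib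

open MeasureTheory ProbabilityTheory

noncomputable def entH {Ω : Type*} [MeasurableSpace Ω] (μ : Measure Ω)
    {S : Type*} [Fintype S] (X : Ω → S) : ℝ :=
  ∑ s : S, Real.negMulLog ((μ (X ⁻¹' {s})).toReal)

noncomputable def condEntH {Ω : Type*} [MeasurableSpace Ω] (μ : Measure Ω)
    {S T : Type*} [Fintype S] [Fintype T] (X : Ω → S) (Y : Ω → T) : ℝ :=
  entH μ (fun ω => (X ω, Y ω)) - entH μ Y

def jointOn {Ω : Type*} {ι : Type*} {S : ι → Type*} (X : ∀ i, Ω → S i) (U : Finset ι) :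
    Ω → ((i : U) → S i) := fun ω i => X i ω

noncomputable def entHset {Ω : Type*} [MeasurableSpace Ω] (μ : Measure Ω)
    {ι : Type*} [DecidableEq ι] {S : ι → Type*} [∀ i, Fintype (S i)]
    (X : ∀ i, Ω → S i) (U : Finset ι) : ℝ :=
  entH μ (jointOn X U)

noncomputable def condEntHset {Ω : Type*} [MeasurableSpace Ω] (μ : Measure Ω)
    {ι : Type*} [DecidableEq ι] {S : ι → Type*} [∀ i, Fintype (S i)]
    (X : ∀ i, Ω → S i) (U A : Finset ι) : ℝ :=
  condEntH μ (jointOn X U) (jointOn X A)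

/-- `Ω_L^{(α)}`: the collection of all `α`-element subsets of the index set. -/
def OmegaL (L α : ℕ) : Finset (Finset (Fin L)) :=
  Finset.powersetCard α (Finset.univ : Finset (Fin L))

/-- `f_α(λ)`: the optimal value of the covering linear program. -/
noncomputable def fLP (L : ℕ) (lam : Fin L → ℝ) (α : ℕ) : ℝ :=
  sSup { x : ℝ | ∃ c : Finset (Fin L) → ℝ,
    (∀ U ∈ OmegaL L α, 0 ≤ c U) ∧
    (∀ l : Fin L, ∑ U ∈ (OmegaL L α).filter (fun U => l ∈ U), c U ≤ lam l) ∧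
    x = ∑ U ∈ OmegaL L α, c U }

/-- `c` is an optimal solution of the linear program defining `f_α(λ)`. -/
def IsOptimal (L : ℕ) (lam : Fin L → ℝ) (α : ℕ) (c : Finset (Fin L) → ℝ) : Prop :=
  (∀ U ∈ OmegaL L α, 0 ≤ c U) ∧
  (∀ l : Fin L, ∑ U ∈ (OmegaL L α).filter (fun U => l ∈ U), c U ≤ lam l) ∧
  ∑ U ∈ OmegaL L α, c U = fLP L lam α

/-- The first `α` indices `{0, …, α−1}` of `Fin L` (corresponding to the sources
`S_1, …, S_α` of the paper). -/
def pre (L : ℕ) (α : ℕ) : Finset (Fin L) :=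
  Finset.univ.filter (fun i : Fin L => (i : ℕ) < α)

/-!
Write `g_n(U) = H(X_U | S_1, …, S_n)`; every `g_n` is a polymatroid. If `c_α` solves the linear
program for `f_α(λ)`, independence of the sources and the decoding condition give
`∑_U c_α(U) g_{α-1}(U) ≥ f_α(λ) (H(S_α) - δ_α) + ∑_U c_α(U) g_α(U)`.

The linear program has optimal solutions filling every `l` to `min(λ_l, G_α)`, where the water
level `G_α = f_α(λ)` solves `α G_α = ∑_l min(λ_l, G_α)`. Going down from `α = L`, push the
weight of every `(α+1)`-set `V` to the sets `V \ {x}`, with weights covering `V` at least once: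
this gives such a `c_α` with `∑_V c_{α+1}(V) g(V) ≤ ∑_U c_α(U) g(U)` for every polymatroid
`g`, by fractional subadditivity. Telescoping over `α` and bounding the first level by
`∑_l λ_l H(X_l)` proves the theorem.
-/

open Finset Real

lemma negMulLog_sum_le {ι : Type*} (t : Finset ι) {a : ι → ℝ} (ha : ∀ i ∈ t, 0 ≤ a i) :
    negMulLog (∑ i ∈ t, a i) ≤ ∑ i ∈ t, negMulLog (a i) := by
  rw [negMulLog, neg_mul, sum_mul, ← sum_neg_distrib]
  refine sum_le_sum fun i hi => ?_
  rcases (ha i hi).eq_or_lt with h0 | h0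
  · simp [← h0]
  · rw [negMulLog, neg_mul, neg_le_neg_iff]
    exact mul_le_mul_of_nonneg_left (log_le_log h0 (single_le_sum ha hi)) h0.le

lemma mul_log_sub_log_le {x y : ℝ} (hx : 0 ≤ x) (hy : 0 ≤ y) (hxy : 0 < x → 0 < y) :
    x * (log y - log x) ≤ y - x := by
  rcases hx.eq_or_lt with rfl | hx
  · simpa using hy
  have hy := hxy hx
  have := log_le_sub_one_of_pos (div_pos hy hx)
  rw [log_div hy.ne' hx.ne'] at this
  calc x * (log y - log x) ≤ x * (y / x - 1) := mul_le_mul_of_nonneg_left this hx.le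
    _ = y - x := by field_simp

lemma sum_sum_negMulLog_add_le {A B : Type*} [Fintype A] [Fintype B] (Q : A → B → ℝ)
    (hQ : ∀ a b, 0 ≤ Q a b) :
    ∑ a, ∑ b, negMulLog (Q a b) + negMulLog (∑ a, ∑ b, Q a b) ≤
      ∑ a, negMulLog (∑ b, Q a b) + ∑ b, negMulLog (∑ a, Q a b) := by
  set r := fun a => ∑ b, Q a b
  set s := fun b => ∑ a, Q a b
  set t := ∑ a, ∑ b, Q a b
  have hQr : ∀ a b, Q a b ≤ r a := fun a b => single_le_sum (fun b _ => hQ a b) (mem_univ b)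
  have hQs : ∀ a b, Q a b ≤ s b := fun a b => single_le_sum (fun a _ => hQ a b) (mem_univ a)
  have hrt : ∀ a, r a ≤ t :=
    fun a => single_le_sum (f := r) (fun a _ => sum_nonneg fun b _ => hQ a b) (mem_univ a)
  -- Gibbs' inequality against the product `r a * s b / t` of the two marginals
  have key : ∀ a b, Q a b * (log (r a) + log (s b) - log t - log (Q a b)) ≤
      r a * s b / t - Q a b := by
    intro a b
    rcases (hQ a b).eq_or_lt with h | h
    · rw [← h, zero_mul, sub_zero]
      exact div_nonneg (mul_nonneg (h ▸ hQr a b) (h ▸ hQs a b)) (h ▸ (hQr a b).trans (hrt a))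
    have hr := h.trans_le (hQr a b)
    have hs := h.trans_le (hQs a b)
    have ht := hr.trans_le (hrt a)
    have := mul_log_sub_log_le (y := r a * s b / t) (hQ a b) (by positivity)
      fun _ => by positivity
    rwa [log_div (by positivity) ht.ne', log_mul hr.ne' hs.ne'] at this
  have hsum := sum_le_sum fun a (_ : a ∈ univ) => sum_le_sum fun b (_ : b ∈ univ) => key a b
  have hlhs : ∑ a, ∑ b, Q a b * (log (r a) + log (s b) - log t - log (Q a b)) =
      ∑ a, r a * log (r a) + ∑ b, s b * log (s b) - t * log t -
        ∑ a, ∑ b, Q a b * log (Q a b) := by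
    simp only [mul_sub, mul_add, sum_sub_distrib, sum_add_distrib, ← sum_mul]
    rw [sum_comm (f := fun a b => Q a b * log (s b))]
    simp only [← sum_mul]
    rfl
  have hrhs : ∑ a, ∑ b, (r a * s b / t - Q a b) = 0 := by
    simp only [sum_sub_distrib, ← mul_sum, ← sum_div, ← sum_mul,
      show ∑ b, s b = t from sum_comm]
    exact sub_eq_zero.2 (mul_self_div_self t)
  rw [hlhs, hrhs] at hsum
  simp only [negMulLog, neg_mul, sum_neg_distrib]
  linarith

section Entropy

variable {Ω : Type*} [MeasurableSpace Ω] {μ : Measure Ω} {S S' T : Type*}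

lemma measureReal_preimage_eq_sum [IsFiniteMeasure μ] [MeasurableSpace S]
    [MeasurableSingletonClass S] {Y : Ω → S} (hY : Measurable Y) {ι : Type*} [Fintype ι]
    {e : ι → S} (he : e.Injective) {W : Ω → S'} {w : S'}
    (h : W ⁻¹' {w} = Y ⁻¹' Set.range e) :
    μ.real (W ⁻¹' {w}) = ∑ i, μ.real (Y ⁻¹' {e i}) := by
  classical
  rw [← sum_image (f := fun s => μ.real (Y ⁻¹' {s})) (s := univ) fun i _ j _ hij => he hij,
    sum_measureReal_preimage_singleton _ fun s _ => hY (measurableSet_singleton s), h]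
  simp

variable [Fintype S]

lemma entH_eq_sum_measureReal (Y : Ω → S) :
    entH μ Y = ∑ s, negMulLog (μ.real (Y ⁻¹' {s})) := rfl

lemma entH_comp_of_injective [Fintype S'] (Y : Ω → S) {g : S → S'} (hg : g.Injective) :
    entH μ (fun ω => g (Y ω)) = entH μ Y := by
  refine (sum_of_injOn g hg.injOn (fun _ _ => mem_univ _) (fun t _ ht => ?_) fun s _ => ?_).symm
  · have : (fun ω => g (Y ω)) ⁻¹' {t} = ∅ :=
      Set.eq_empty_of_forall_notMem fun ω hω => ht ⟨Y ω, by simp, hω⟩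
    simp [this]
  · simp only [Set.preimage, Set.mem_singleton_iff, hg.eq_iff]

lemma condEntH_comp_left [Fintype T] [Fintype S'] (X : Ω → S) (Y : Ω → T) {g : S → S'}
    (hg : g.Injective) : condEntH μ (fun ω => g (X ω)) Y = condEntH μ X Y := by
  rw [condEntH, condEntH,
    ← entH_comp_of_injective (fun ω => (X ω, Y ω))
      (hg.prodMap (Function.injective_id (α := T)))]
  rfl

lemma condEntH_comp_right [Fintype T] [Fintype S'] (X : Ω → S) (Y : Ω → T) {g : T → S'}
    (hg : g.Injective) : condEntH μ X (fun ω => g (Y ω)) = condEntH μ X Y := by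
  rw [condEntH, condEntH, entH_comp_of_injective Y hg,
    ← entH_comp_of_injective (fun ω => (X ω, Y ω))
      ((Function.injective_id (α := S)).prodMap hg)]
  rfl

variable [IsProbabilityMeasure μ]

lemma entH_nonneg (Y : Ω → S) : 0 ≤ entH μ Y :=
  sum_nonneg fun _ _ => negMulLog_nonneg measureReal_nonneg measureReal_le_one

lemma entH_of_subsingleton [Subsingleton S] (Y : Ω → S) : entH μ Y = 0 := by
  refine sum_eq_zero fun s _ => ?_
  rw [show Y ⁻¹' {s} = Set.univ from Set.eq_univ_of_forall fun ω => Subsingleton.elim _ _]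
  simp

lemma condEntH_of_subsingleton [Fintype T] [Subsingleton T] (X : Ω → S) (Y : Ω → T) :
    condEntH μ X Y = entH μ X := by
  have hfst : (Prod.fst : S × T → S).Injective := fun p q h => Prod.ext h (Subsingleton.elim _ _)
  rw [condEntH, entH_of_subsingleton Y, sub_zero,
    ← entH_comp_of_injective (fun ω => (X ω, Y ω)) hfst]

variable [MeasurableSpace S] [MeasurableSingletonClass S]

lemma sum_measureReal_preimage_singleton_eq_one {Y : Ω → S} (hY : Measurable Y) :
    ∑ s, μ.real (Y ⁻¹' {s}) = 1 := by
  rw [sum_measureReal_preimage_singleton _ fun s _ => hY (measurableSet_singleton s)]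
  simp

lemma measureReal_preimage_comp [DecidableEq S'] {Y : Ω → S} (hY : Measurable Y) (g : S → S')
    (t : S') :
    μ.real ((fun ω => g (Y ω)) ⁻¹' {t}) = ∑ s with g s = t, μ.real (Y ⁻¹' {s}) := by
  rw [sum_measureReal_preimage_singleton _ fun s _ => hY (measurableSet_singleton s)]
  congr 1
  ext ω
  simp

lemma entH_comp_le [Fintype S'] {Y : Ω → S} (hY : Measurable Y) (g : S → S') :
    entH μ (fun ω => g (Y ω)) ≤ entH μ Y := by
  classical
  calc entH μ (fun ω => g (Y ω))
      ≤ ∑ t : S', ∑ s with g s = t, negMulLog (μ.real (Y ⁻¹' {s})) := by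
        refine sum_le_sum fun t _ => ?_
        rw [← measureReal_def, measureReal_preimage_comp hY]
        exact negMulLog_sum_le _ fun _ _ => measureReal_nonneg
    _ = entH μ Y := sum_fiberwise _ g _

end Entropy

section EntropyInequalities

variable {Ω : Type*} [MeasurableSpace Ω] {μ : Measure Ω} [IsProbabilityMeasure μ]
  {A B C : Type*} [Fintype A] [Fintype B] [Fintype C] [MeasurableSpace A]
  [MeasurableSingletonClass A] [MeasurableSpace B] [MeasurableSingletonClass B]
  [MeasurableSpace C] [MeasurableSingletonClass C] {X : Ω → A} {Y : Ω → B} {Z : Ω → C}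

lemma entH_prod_of_indepFun (hX : Measurable X) (hY : Measurable Y) (h : IndepFun X Y μ) :
    entH μ (fun ω => (X ω, Y ω)) = entH μ X + entH μ Y := by
  have hprod : ∀ a b, μ.real ((fun ω => (X ω, Y ω)) ⁻¹' {(a, b)}) =
      μ.real (X ⁻¹' {a}) * μ.real (Y ⁻¹' {b}) := by
    intro a b
    rw [show (fun ω => (X ω, Y ω)) ⁻¹' {(a, b)} = X ⁻¹' {a} ∩ Y ⁻¹' {b} by ext; simp,
      measureReal_def, h.measure_inter_preimage_eq_mul _ _ (measurableSet_singleton a)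
        (measurableSet_singleton b), ENNReal.toReal_mul]
    rfl
  simp only [entH_eq_sum_measureReal, Fintype.sum_prod_type, hprod, negMulLog_mul,
    sum_add_distrib, ← sum_mul, ← mul_sum, sum_measureReal_preimage_singleton_eq_one hX,
    sum_measureReal_preimage_singleton_eq_one hY, one_mul]

lemma entH_prod_add_le (hX : Measurable X) (hY : Measurable Y) (hZ : Measurable Z) :
    entH μ (fun ω => (Z ω, (X ω, Y ω))) + entH μ Z ≤
      entH μ (fun ω => (Z ω, X ω)) + entH μ (fun ω => (Z ω, Y ω)) := by
  have hZXY : Measurable fun ω => (Z ω, (X ω, Y ω)) := hZ.prodMk (hX.prodMk hY)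
  set P := fun c a b => μ.real ((fun ω => (Z ω, (X ω, Y ω))) ⁻¹' {(c, (a, b))})
  have hZX : ∀ c a, μ.real ((fun ω => (Z ω, X ω)) ⁻¹' {(c, a)}) = ∑ b, P c a b :=
    fun c a =>
    measureReal_preimage_eq_sum hZXY (e := fun b => (c, (a, b))) (fun _ _ => by simp)
      (by ext; simp [eq_comm])
  have hZY : ∀ c b, μ.real ((fun ω => (Z ω, Y ω)) ⁻¹' {(c, b)}) = ∑ a, P c a b :=
    fun c b =>
    measureReal_preimage_eq_sum hZXY (e := fun a => (c, (a, b))) (fun _ _ => by simp)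
      (by ext; simp [eq_comm])
  have hZ' : ∀ c, μ.real (Z ⁻¹' {c}) = ∑ a, ∑ b, P c a b := fun c => by
    rw [measureReal_preimage_eq_sum hZXY (e := fun p : A × B => (c, p)) (fun _ _ => by simp)
      (by ext; simp [eq_comm]), Fintype.sum_prod_type]
  simp only [entH_eq_sum_measureReal, Fintype.sum_prod_type, hZX, hZY, hZ', ← sum_add_distrib]
  exact sum_le_sum fun c _ => sum_sum_negMulLog_add_le (P c) fun _ _ => measureReal_nonneg

lemma entH_sub_condEntH_add_condEntH_le (hX : Measurable X) (hY : Measurable Y)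
    (hZ : Measurable Z) (h : IndepFun X Y μ) :
    entH μ X - condEntH μ (fun ω => (X ω, Y ω)) Z + condEntH μ Z (fun ω => (X ω, Y ω)) ≤
      condEntH μ Z Y := by
  have hswap :
      entH μ (fun ω => (Z ω, (X ω, Y ω))) = entH μ (fun ω => ((X ω, Y ω), Z ω)) :=
    entH_comp_of_injective (μ := μ) (fun ω => ((X ω, Y ω), Z ω)) (g := Prod.swap)
      Prod.swap_injective
  have hmono : entH μ Z ≤ entH μ (fun ω => (Z ω, Y ω)) :=
    entH_comp_le (μ := μ) (hZ.prodMk hY) Prod.fst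
  rw [condEntH, condEntH, condEntH, entH_prod_of_indepFun hX hY h, hswap]
  linarith

end EntropyInequalities

structure IsPolymatroid {ι : Type*} [DecidableEq ι] (g : Finset ι → ℝ) : Prop where
  map_empty : g ∅ = 0
  mono : Monotone g
  union_add_inter_le : ∀ A B, g (A ∪ B) + g (A ∩ B) ≤ g A + g B

namespace IsPolymatroid

variable {ι : Type*} [DecidableEq ι] {g : Finset ι → ℝ}

lemma nonneg (hg : IsPolymatroid g) (A : Finset ι) : 0 ≤ g A :=
  hg.map_empty ▸ hg.mono (empty_subset A)

lemma insert_sub_le_insert_sub (hg : IsPolymatroid g) {a : ι} {A B : Finset ι} (hAB : A ⊆ B)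
    (ha : a ∉ B) : g (insert a B) - g B ≤ g (insert a A) - g A := by
  have h := hg.union_add_inter_le (insert a A) B
  rw [insert_union, union_eq_right.2 hAB, insert_inter_of_notMem ha, inter_eq_left.2 hAB] at h
  linarith

lemma sum_mul_sub_erase_le (hg : IsPolymatroid g) {u : ι → ℝ} {M : ℝ} (U : Finset ι)
    (hu : ∀ x ∈ U, 0 ≤ u x) (huM : ∀ x ∈ U, u x ≤ M) :
    ∑ x ∈ U, u x * (g U - g (U.erase x)) ≤ M * g U := by
  induction U using Finset.induction_on with
  | empty => simp [hg.map_empty]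
  | insert a U ha IH =>
    have hstep : ∀ x ∈ U, u x * (g (insert a U) - g ((insert a U).erase x)) ≤
        u x * (g U - g (U.erase x)) := fun x hx => by
      rw [erase_insert_of_ne (ne_of_mem_of_not_mem hx ha).symm]
      have := hg.insert_sub_le_insert_sub (erase_subset x U) ha
      exact mul_le_mul_of_nonneg_left (by linarith) (hu x (mem_insert_of_mem hx))
    have hIH := IH (fun x hx => hu x (mem_insert_of_mem hx))
      (fun x hx => huM x (mem_insert_of_mem hx))
    have hgrow : 0 ≤ g (insert a U) - g U := sub_nonneg.2 (hg.mono (subset_insert a U))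
    have hua := mul_le_mul_of_nonneg_right (huM a (mem_insert_self a U)) hgrow
    rw [sum_insert ha, erase_insert ha]
    linarith [sum_le_sum hstep]

/-- Fractional subadditivity. -/
lemma mul_le_sum_mul_erase (hg : IsPolymatroid g) {u : ι → ℝ} {τ : ℝ} (U : Finset ι)
    (hu : ∀ x ∈ U, 0 ≤ u x) (hτ : ∀ l ∈ U, τ ≤ ∑ x ∈ U.erase l, u x) :
    τ * g U ≤ ∑ x ∈ U, u x * g (U.erase x) := by
  have h := hg.sum_mul_sub_erase_le (M := ∑ x ∈ U, u x - τ) U hu fun x hx => by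
    linarith [hτ x hx, add_sum_erase U u hx]
  simp only [mul_sub, sum_sub_distrib, ← sum_mul] at h
  linarith

end IsPolymatroid

lemma measurable_jointOn {Ω ι : Type*} [MeasurableSpace Ω] {V : ι → Type*}
    [∀ i, MeasurableSpace (V i)] {X : ∀ i, Ω → V i} (hX : ∀ i, Measurable (X i))
    (U : Finset ι) : Measurable (jointOn X U) :=
  measurable_pi_lambda _ fun i => hX i

lemma restrict₂_prodMk_injective {ι : Type*} [DecidableEq ι] {V : ι → Type*}
    {A B C : Finset ι} (hA : A ⊆ C) (hB : B ⊆ C) (hC : C ⊆ A ∪ B) :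
    (fun f : (i : C) → V i => (Finset.restrict₂ hA f, Finset.restrict₂ hB f)).Injective := by
  intro f f' h
  simp only [Prod.mk.injEq] at h
  funext ⟨i, hi⟩
  rcases mem_union.1 (hC hi) with hiA | hiB
  · exact congrFun h.1 ⟨i, hiA⟩
  · exact congrFun h.2 ⟨i, hiB⟩

lemma entH_jointOn_singleton {Ω ι : Type*} [MeasurableSpace Ω] {μ : Measure Ω} [DecidableEq ι]
    {V : ι → Type*} [∀ i, Fintype (V i)] (X : ∀ i, Ω → V i) (l : ι) :
    entH μ (jointOn X {l}) = entH μ (X l) :=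
  (entH_comp_of_injective (jointOn X {l}) (g := fun f => f ⟨l, mem_singleton_self l⟩)
    fun f f' h => funext fun ⟨j, hj⟩ => by obtain rfl := mem_singleton.1 hj; exact h).symm

lemma condEntH_jointOn_empty {Ω ι T : Type*} [MeasurableSpace Ω] {μ : Measure Ω}
    [DecidableEq ι] {V : ι → Type*} [∀ i, Fintype (V i)] [Fintype T] {X : ∀ i, Ω → V i}
    {W : Ω → T} :
    condEntH μ (jointOn X ∅) W = 0 := by
  have hsnd : (Prod.snd : ((i : (∅ : Finset ι)) → V i) × T → T).Injective :=
    fun p q h => Prod.ext (funext fun i => (notMem_empty _ i.2).elim) h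
  rw [condEntH, ← entH_comp_of_injective (fun ω => (jointOn X ∅ ω, W ω)) hsnd, sub_self]

section JointEntropy

variable {Ω : Type*} [MeasurableSpace Ω] {μ : Measure Ω} [IsProbabilityMeasure μ]
  {ι : Type*} [DecidableEq ι] {V : ι → Type*} [∀ i, Fintype (V i)]
  [∀ i, MeasurableSpace (V i)] [∀ i, MeasurableSingletonClass (V i)] {X : ∀ i, Ω → V i}
  {T : Type*} [Fintype T] [MeasurableSpace T] [MeasurableSingletonClass T] {W : Ω → T}

lemma condEntH_jointOn_mono (hX : ∀ i, Measurable (X i)) (hW : Measurable W) {A B : Finset ι}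
    (hAB : A ⊆ B) : condEntH μ (jointOn X A) W ≤ condEntH μ (jointOn X B) W :=
  sub_le_sub_right (entH_comp_le (μ := μ) ((measurable_jointOn hX B).prodMk hW)
    (Prod.map (Finset.restrict₂ hAB : ((i : B) → V i) → (i : A) → V i) id)) _

lemma condEntH_jointOn_union_add_inter_le (hX : ∀ i, Measurable (X i)) (hW : Measurable W)
    (A B : Finset ι) :
    condEntH μ (jointOn X (A ∪ B)) W + condEntH μ (jointOn X (A ∩ B)) W ≤
      condEntH μ (jointOn X A) W + condEntH μ (jointOn X B) W := by
  have h := entH_prod_add_le (μ := μ) (measurable_jointOn hX A) (measurable_jointOn hX B)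
    ((measurable_jointOn hX (A ∩ B)).prodMk hW)
  -- submodularity of entropy for `Z = (X_{A ∩ B}, W)`, `X = X_A`, `Y = X_B`, then relabel
  have hunion :
      entH μ (fun ω => ((jointOn X (A ∩ B) ω, W ω), jointOn X A ω, jointOn X B ω)) =
        entH μ (fun ω => (jointOn X (A ∪ B) ω, W ω)) :=
    entH_comp_of_injective (fun ω => (jointOn X (A ∪ B) ω, W ω))
      (g := fun p : ((i : ↥(A ∪ B)) → V i) × T =>
        ((Finset.restrict₂ (inter_subset_left.trans subset_union_left) p.1, p.2),
          Finset.restrict₂ subset_union_left p.1, Finset.restrict₂ subset_union_right p.1))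
      fun p q h => by
        simp only [Prod.mk.injEq] at h
        exact Prod.ext (restrict₂_prodMk_injective subset_union_left subset_union_right
          subset_rfl (Prod.ext h.2.1 h.2.2)) h.1.2
  have hleft : entH μ (fun ω => ((jointOn X (A ∩ B) ω, W ω), jointOn X A ω)) =
      entH μ (fun ω => (jointOn X A ω, W ω)) :=
    entH_comp_of_injective (fun ω => (jointOn X A ω, W ω))
      (g := fun p : ((i : ↥A) → V i) × T =>
        ((Finset.restrict₂ inter_subset_left p.1, p.2), p.1))
      fun p q h => by simp only [Prod.mk.injEq] at h; exact Prod.ext h.2 h.1.2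
  have hright : entH μ (fun ω => ((jointOn X (A ∩ B) ω, W ω), jointOn X B ω)) =
      entH μ (fun ω => (jointOn X B ω, W ω)) :=
    entH_comp_of_injective (fun ω => (jointOn X B ω, W ω))
      (g := fun p : ((i : ↥B) → V i) × T =>
        ((Finset.restrict₂ inter_subset_right p.1, p.2), p.1))
      fun p q h => by simp only [Prod.mk.injEq] at h; exact Prod.ext h.2 h.1.2
  rw [hunion, hleft, hright] at h
  simp only [condEntH]
  linarith

lemma isPolymatroid_condEntH_jointOn (hX : ∀ i, Measurable (X i)) (hW : Measurable W) :
    IsPolymatroid fun U => condEntH μ (jointOn X U) W :=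
  ⟨condEntH_jointOn_empty, fun _ _ => condEntH_jointOn_mono hX hW,
    condEntH_jointOn_union_add_inter_le hX hW⟩

end JointEntropy

section WaterLevel

variable {ι : Type*} [Fintype ι] {lam : ι → ℝ} {α : ℕ}

variable (lam) in
/-- Water filling: the highest level `F` at which vessels of capacities `lam l`, filled up to
`F`, hold `α * F`. It is the value `f_α(λ)` of the linear program, see `IsWaterFilling.fLP_eq`.
-/
noncomputable def waterLevel (α : ℕ) : ℝ :=
  sSup {F : ℝ | 0 ≤ F ∧ α * F ≤ ∑ l, min (lam l) F}

lemma bddAbove_waterLevel_set (hα : 1 ≤ α) :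
    BddAbove {F : ℝ | 0 ≤ F ∧ α * F ≤ ∑ l, min (lam l) F} := by
  refine ⟨∑ l, lam l, fun F ⟨hF0, hF⟩ => ?_⟩
  have : F ≤ α * F := le_mul_of_one_le_left hF0 (by exact_mod_cast hα)
  linarith [sum_le_sum fun l (_ : l ∈ univ) => min_le_left (lam l) F]

lemma le_waterLevel (hα : 1 ≤ α) {F : ℝ} (hF0 : 0 ≤ F)
    (hF : α * F ≤ ∑ l, min (lam l) F) : F ≤ waterLevel lam α :=
  le_csSup (bddAbove_waterLevel_set hα) ⟨hF0, hF⟩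

lemma waterLevel_mem (hlam : ∀ l, 0 ≤ lam l) (hα : 1 ≤ α) :
    0 ≤ waterLevel lam α ∧
      α * waterLevel lam α ≤ ∑ l, min (lam l) (waterLevel lam α) := by
  have hclosed : IsClosed {F : ℝ | 0 ≤ F ∧ α * F ≤ ∑ l, min (lam l) F} :=
    (isClosed_le continuous_const continuous_id).inter
      (isClosed_le (continuous_const.mul continuous_id)
        (continuous_finsetSum _ fun l _ => continuous_const.min continuous_id))
  exact hclosed.csSup_mem ⟨0, le_rfl, by simp [min_eq_right (hlam _)]⟩
    (bddAbove_waterLevel_set hα)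

lemma waterLevel_nonneg (hlam : ∀ l, 0 ≤ lam l) (hα : 1 ≤ α) : 0 ≤ waterLevel lam α :=
  (waterLevel_mem hlam hα).1

lemma mul_waterLevel (hlam : ∀ l, 0 ≤ lam l) (hα : 1 ≤ α) :
    α * waterLevel lam α = ∑ l, min (lam l) (waterLevel lam α) := by
  set G := waterLevel lam α
  obtain ⟨hG0, hG⟩ := waterLevel_mem hlam hα
  refine hG.antisymm (not_lt.1 fun hlt => ?_)
  -- otherwise raising the level by `ε`, with `α * ε` the slack, stays admissible
  set ε := (∑ l, min (lam l) G - α * G) / α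
  have hαpos : (0 : ℝ) < α := by exact_mod_cast hα
  have hε : 0 < ε := div_pos (by linarith) hαpos
  have hmono : ∑ l, min (lam l) G ≤ ∑ l, min (lam l) (G + ε) :=
    sum_le_sum fun l _ => min_le_min_left _ (by linarith)
  have hle := le_waterLevel hα (F := G + ε) (by linarith) (by
    rw [mul_add, mul_div_cancel₀ _ hαpos.ne']
    linarith)
  linarith

lemma waterLevel_succ_le (hlam : ∀ l, 0 ≤ lam l) (hα : 1 ≤ α) :
    waterLevel lam (α + 1) ≤ waterLevel lam α := by
  obtain ⟨hG0, hG⟩ := waterLevel_mem hlam (α := α + 1) (by omega)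
  refine le_waterLevel hα hG0 (le_trans ?_ hG)
  push_cast
  linarith

lemma waterLevel_pos_iff (hlam : ∀ l, 0 ≤ lam l) (hα : 1 ≤ α) :
    0 < waterLevel lam α ↔ α ≤ #{l | 0 < lam l} := by
  set P : Finset ι := {l | 0 < lam l}
  have hout : ∀ l ∉ P, lam l = 0 := fun l hl =>
    (hlam l).antisymm' (not_lt.1 fun h => hl (mem_filter.2 ⟨mem_univ l, h⟩))
  have hsum : ∀ F, 0 ≤ F → ∑ l, min (lam l) F = ∑ l ∈ P, min (lam l) F := fun F hF =>
    (sum_subset (subset_univ P) fun l _ hl => by rw [hout l hl, min_eq_left hF]).symm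
  constructor
  · intro hG
    have h := mul_waterLevel hlam hα
    rw [hsum _ hG.le] at h
    have : (α : ℝ) * waterLevel lam α ≤ #P * waterLevel lam α := by
      rw [h, ← nsmul_eq_mul]
      exact sum_le_card_nsmul _ _ _ fun l _ => min_le_right _ _
    exact_mod_cast le_of_mul_le_mul_right this hG
  · intro hP
    obtain ⟨l₀, hl₀, hmin⟩ := P.exists_min_image lam (card_pos.1 (by omega))
    have hl₀pos : 0 < lam l₀ := (mem_filter.1 hl₀).2
    refine hl₀pos.trans_le (le_waterLevel hα hl₀pos.le ?_)
    rw [hsum _ hl₀pos.le, sum_congr rfl fun l hl => min_eq_right (hmin l hl), sum_const,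
      nsmul_eq_mul]
    exact mul_le_mul_of_nonneg_right (by exact_mod_cast hP) hl₀pos.le

variable (lam α) in
noncomputable def levelGain (x : ι) : ℝ :=
  min (lam x) (waterLevel lam α) - min (lam x) (waterLevel lam (α + 1))

lemma levelGain_nonneg (hlam : ∀ l, 0 ≤ lam l) (hα : 1 ≤ α) (x : ι) :
    0 ≤ levelGain lam α x :=
  sub_nonneg.2 (min_le_min_left _ (waterLevel_succ_le hlam hα))

lemma levelGain_le (hlam : ∀ l, 0 ≤ lam l) (hα : 1 ≤ α) (x : ι) :
    levelGain lam α x ≤ waterLevel lam α - waterLevel lam (α + 1) := by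
  have hle := waterLevel_succ_le hlam hα
  rw [levelGain]
  rcases le_total (lam x) (waterLevel lam (α + 1)) with h | h
  · rw [min_eq_left h, min_eq_left (h.trans hle)]
    linarith
  · rw [min_eq_right h]
    linarith [min_le_right (lam x) (waterLevel lam α)]

lemma waterLevel_succ_lt_of_levelGain_ne_zero (hlam : ∀ l, 0 ≤ lam l) (hα : 1 ≤ α) {x : ι}
    (hx : levelGain lam α x ≠ 0) : waterLevel lam (α + 1) < lam x :=
  not_le.1 fun h => hx (by
    rw [levelGain, min_eq_left h, min_eq_left (h.trans (waterLevel_succ_le hlam hα)), sub_self])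

lemma sum_levelGain (hlam : ∀ l, 0 ≤ lam l) (hα : 1 ≤ α) :
    ∑ x, levelGain lam α x = α * waterLevel lam α - (α + 1) * waterLevel lam (α + 1) := by
  have h := mul_waterLevel hlam (α := α + 1) (by omega)
  push_cast at h
  rw [h, mul_waterLevel hlam hα, ← sum_sub_distrib]
  rfl

lemma min_waterLevel_succ_mul_one_add_levelGain (hlam : ∀ l, 0 ≤ lam l) (hα : 1 ≤ α)
    (hG' : 0 < waterLevel lam (α + 1)) (x : ι) :
    min (lam x) (waterLevel lam (α + 1)) * (1 + levelGain lam α x / waterLevel lam (α + 1)) =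
      min (lam x) (waterLevel lam α) := by
  rcases eq_or_ne (levelGain lam α x) 0 with h | h
  · rw [h, zero_div, add_zero, mul_one]
    exact (sub_eq_zero.1 h).symm
  · have hlt := (waterLevel_succ_lt_of_levelGain_ne_zero hlam hα h).le
    rw [min_eq_right hlt, mul_add, mul_one, mul_div_cancel₀ _ hG'.ne', levelGain,
      min_eq_right hlt]
    ring

variable (lam α) in
/-- Chosen so that on every set `V` carrying weight, `∑ x ∈ V.erase l, pushDownWeight lam α x`
is `1 + levelGain lam α l / waterLevel lam (α + 1)`, the factor by which the constraint of `l`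
grows from level `α + 1` to level `α` (see `IsWaterFilling.sum_erase_pushDownWeight`). -/
noncomputable def pushDownWeight (x : ι) : ℝ :=
  (waterLevel lam α - waterLevel lam (α + 1) - levelGain lam α x) / waterLevel lam (α + 1)

lemma pushDownWeight_nonneg (hlam : ∀ l, 0 ≤ lam l) (hα : 1 ≤ α) (x : ι) :
    0 ≤ pushDownWeight lam α x :=
  div_nonneg (by linarith [levelGain_le hlam hα x]) (waterLevel_nonneg hlam (by omega))

end WaterLevel

section LinearProgram

variable {L : ℕ} {lam : Fin L → ℝ} {α : ℕ}

@[simp]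
lemma mem_OmegaL {U : Finset (Fin L)} : U ∈ OmegaL L α ↔ #U = α := by
  simp [OmegaL, mem_powersetCard]

lemma sum_sum_filter_mem_eq_mul (c : Finset (Fin L) → ℝ) :
    ∑ l, ∑ U ∈ (OmegaL L α).filter (fun U => l ∈ U), c U =
      α * ∑ U ∈ OmegaL L α, c U := by
  simp only [sum_filter]
  rw [sum_comm, mul_sum]
  refine sum_congr rfl fun U hU => ?_
  rw [← sum_filter, filter_mem_eq_inter, univ_inter, sum_const, mem_OmegaL.1 hU, nsmul_eq_mul]

lemma sum_le_waterLevel (hα : 1 ≤ α) {c : Finset (Fin L) → ℝ}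
    (hc0 : ∀ U ∈ OmegaL L α, 0 ≤ c U)
    (hc : ∀ l, ∑ U ∈ (OmegaL L α).filter (fun U => l ∈ U), c U ≤ lam l) :
    ∑ U ∈ OmegaL L α, c U ≤ waterLevel lam α := by
  refine le_waterLevel hα (sum_nonneg hc0) ?_
  rw [← sum_sum_filter_mem_eq_mul]
  exact sum_le_sum fun l _ => le_min (hc l)
    (sum_le_sum_of_subset_of_nonneg (filter_subset _ _) fun U hU _ => hc0 U hU)

variable (lam α) in
structure IsWaterFilling (c : Finset (Fin L) → ℝ) : Prop where
  nonneg : ∀ U ∈ OmegaL L α, 0 ≤ c U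
  sum_filter_mem : ∀ l,
    ∑ U ∈ (OmegaL L α).filter (fun U => l ∈ U), c U = min (lam l) (waterLevel lam α)

namespace IsWaterFilling

variable {c : Finset (Fin L) → ℝ}

lemma sum_eq (hc : IsWaterFilling lam α c) (hlam : ∀ l, 0 ≤ lam l) (hα : 1 ≤ α) :
    ∑ U ∈ OmegaL L α, c U = waterLevel lam α := by
  have h := sum_sum_filter_mem_eq_mul (α := α) c
  rw [sum_congr rfl fun l _ => hc.sum_filter_mem l, ← mul_waterLevel hlam hα] at h
  exact (mul_left_cancel₀ (by positivity) h).symm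

lemma fLP_eq (hc : IsWaterFilling lam α c) (hlam : ∀ l, 0 ≤ lam l) (hα : 1 ≤ α) :
    fLP L lam α = ∑ U ∈ OmegaL L α, c U := by
  have hfeas : ∀ l, ∑ U ∈ (OmegaL L α).filter (fun U => l ∈ U), c U ≤ lam l := fun l =>
    (hc.sum_filter_mem l).trans_le (min_le_left _ _)
  refine le_antisymm (Real.sSup_le ?_ (sum_nonneg hc.nonneg))
    (le_csSup ⟨waterLevel lam α, ?_⟩ ⟨c, hc.nonneg, hfeas, rfl⟩)
  · rintro _ ⟨c', hc'0, hc', rfl⟩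
    exact (sum_le_waterLevel hα hc'0 hc').trans (hc.sum_eq hlam hα).ge
  · rintro _ ⟨c', hc'0, hc', rfl⟩
    exact sum_le_waterLevel hα hc'0 hc'

lemma le_of_mem (hc : IsWaterFilling lam α c) {U : Finset (Fin L)} (hU : U ∈ OmegaL L α)
    {l : Fin L} (hl : l ∈ U) : c U ≤ lam l :=
  (single_le_sum (fun V hV => hc.nonneg V (mem_of_mem_filter V hV))
    (mem_filter.2 ⟨hU, hl⟩)).trans ((hc.sum_filter_mem l).trans_le (min_le_left _ _))

lemma mem_of_waterLevel_lt (hc : IsWaterFilling lam α c) (hlam : ∀ l, 0 ≤ lam l)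
    (hα : 1 ≤ α) {l : Fin L} (hl : waterLevel lam α < lam l) {V : Finset (Fin L)}
    (hV : V ∈ OmegaL L α) (hcV : c V ≠ 0) : l ∈ V := by
  by_contra hlV
  have h := sum_filter_add_sum_filter_not (OmegaL L α) (fun U => l ∈ U) c
  rw [hc.sum_filter_mem l, min_eq_right hl.le, hc.sum_eq hlam hα, add_eq_left,
    sum_eq_zero_iff_of_nonneg fun U hU => hc.nonneg U (mem_of_mem_filter U hU)] at h
  exact hcV (h V (mem_filter.2 ⟨hV, hlV⟩))

end IsWaterFilling

lemma isWaterFilling_zero (hG : waterLevel lam α = 0) (hlam : ∀ l, 0 ≤ lam l) :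
    IsWaterFilling lam α 0 :=
  ⟨fun _ _ => le_rfl, fun l => by simp [hG, min_eq_right (hlam l)]⟩

lemma isWaterFilling_single (hlam : ∀ l, 0 ≤ lam l) (hα : 1 ≤ α) {P : Finset (Fin L)}
    (hP : P ∈ OmegaL L α) (hout : ∀ l ∉ P, lam l = 0) :
    IsWaterFilling lam α (Pi.single P (waterLevel lam α)) := by
  have hG0 := waterLevel_nonneg hlam hα
  -- `α * G = ∑ l ∈ P, min (lam l) G` (`G` the level) has `#P = α` terms, each `≤ G`
  have hfull : ∀ l ∈ P, min (lam l) (waterLevel lam α) = waterLevel lam α := by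
    have h := mul_waterLevel hlam hα
    have hcard : (α : ℝ) = #P := by rw [mem_OmegaL.1 hP]
    rw [← sum_subset (subset_univ P) fun l _ hl => by rw [hout l hl, min_eq_left hG0],
      hcard, ← nsmul_eq_mul, ← sum_const] at h
    exact (sum_eq_sum_iff_of_le fun l _ => min_le_right _ _).1 h.symm
  refine ⟨fun U _ => ?_, fun l => ?_⟩
  · by_cases h : U = P
    · simpa [h] using hG0
    · simp [h]
  · rw [sum_pi_single']
    by_cases hl : l ∈ P
    · rw [if_pos (mem_filter.2 ⟨hP, hl⟩), hfull l hl]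
    · rw [if_neg fun h : P ∈ (OmegaL L α).filter (fun U => l ∈ U) => hl (mem_filter.1 h).2,
        hout l hl, min_eq_left hG0]

lemma exists_isWaterFilling_of_waterLevel_succ_eq_zero (hlam : ∀ l, 0 ≤ lam l) (hα : 1 ≤ α)
    (h : waterLevel lam (α + 1) = 0) : ∃ c, IsWaterFilling lam α c := by
  rcases (waterLevel_nonneg hlam hα).eq_or_lt with hG | hG
  · exact ⟨0, isWaterFilling_zero hG.symm hlam⟩
  have hle : ¬ α + 1 ≤ #{l | 0 < lam l} := by
    rw [← waterLevel_pos_iff hlam (by omega), h]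
    exact lt_irrefl 0
  have hcard : #{l | 0 < lam l} = α := by
    have := (waterLevel_pos_iff hlam hα).1 hG
    omega
  refine ⟨_, isWaterFilling_single hlam hα (mem_OmegaL.2 hcard) fun l hl => ?_⟩
  exact (hlam l).antisymm' (not_lt.1 fun h => hl (mem_filter.2 ⟨mem_univ l, h⟩))

/-- Every `(α + 1)`-set `V` passes the share `c V * u x` of its weight to `V.erase x`. -/
def pushDown (c : Finset (Fin L) → ℝ) (u : Fin L → ℝ) (U : Finset (Fin L)) : ℝ :=
  ∑ x ∈ Uᶜ, c (insert x U) * u x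

lemma sum_pushDown_mul (c g : Finset (Fin L) → ℝ) (u : Fin L → ℝ) (α : ℕ) :
    ∑ U ∈ OmegaL L α, pushDown c u U * g U =
      ∑ V ∈ OmegaL L (α + 1), c V * ∑ x ∈ V, u x * g (V.erase x) := by
  simp only [pushDown, sum_mul, mul_sum]
  rw [sum_sigma', sum_sigma']
  refine sum_nbij' (fun p => ⟨insert p.2 p.1, p.2⟩) (fun p => ⟨p.1.erase p.2, p.2⟩)
    ?_ ?_ ?_ ?_ ?_
  · rintro ⟨U, x⟩ h
    simp only [mem_sigma, mem_OmegaL, mem_compl] at h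
    simp [card_insert_of_notMem h.2, h.1]
  · rintro ⟨V, x⟩ h
    simp only [mem_sigma, mem_OmegaL] at h
    simp [card_erase_of_mem h.2, h.1]
  · rintro ⟨U, x⟩ h
    simp only [mem_sigma, mem_compl] at h
    simp [erase_insert h.2]
  · rintro ⟨V, x⟩ h
    simp only [mem_sigma] at h
    simp [insert_erase h.2]
  · rintro ⟨U, x⟩ h
    simp only [mem_sigma, mem_compl] at h
    simp only [erase_insert h.2]
    ring

lemma sum_filter_mem_pushDown (c : Finset (Fin L) → ℝ) (u : Fin L → ℝ) (α : ℕ)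
    (l : Fin L) :
    ∑ U ∈ (OmegaL L α).filter (fun U => l ∈ U), pushDown c u U =
      ∑ V ∈ (OmegaL L (α + 1)).filter (fun V => l ∈ V), c V * ∑ x ∈ V.erase l, u x := by
  have h := sum_pushDown_mul c (fun U => if l ∈ U then 1 else 0) u α
  simp only [mul_ite, mul_one, mul_zero, ← sum_filter] at h
  rw [h, sum_filter]
  refine sum_congr rfl fun V _ => ?_
  split_ifs with hl
  · congr 2
    ext x
    simp only [mem_filter, mem_erase]
    tauto
  · simp [hl]

namespace IsWaterFilling

variable {c' : Finset (Fin L) → ℝ}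

lemma sum_erase_pushDownWeight (hc' : IsWaterFilling lam (α + 1) c') (hlam : ∀ l, 0 ≤ lam l)
    (hα : 1 ≤ α) (hG' : 0 < waterLevel lam (α + 1)) {V : Finset (Fin L)}
    (hV : V ∈ OmegaL L (α + 1)) (hcV : c' V ≠ 0) {l : Fin L} (hl : l ∈ V) :
    ∑ x ∈ V.erase l, pushDownWeight lam α x =
      1 + levelGain lam α l / waterLevel lam (α + 1) := by
  have hgain : ∑ x ∈ V, levelGain lam α x = ∑ x, levelGain lam α x :=
    sum_subset (subset_univ V) fun x _ hx => by_contra fun h => hx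
      (hc'.mem_of_waterLevel_lt hlam (by omega)
        (waterLevel_succ_lt_of_levelGain_ne_zero hlam hα h) hV hcV)
  have hsum :
      ∑ x ∈ V, pushDownWeight lam α x = waterLevel lam α / waterLevel lam (α + 1) := by
    simp only [pushDownWeight, ← sum_div, sum_sub_distrib, sum_const, mem_OmegaL.1 hV, hgain,
      sum_levelGain hlam hα, nsmul_eq_mul]
    push_cast
    ring_nf
  have hl' : pushDownWeight lam α l * waterLevel lam (α + 1) =
      waterLevel lam α - waterLevel lam (α + 1) - levelGain lam α l :=
    div_mul_cancel₀ _ hG'.ne'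
  rw [← add_sum_erase V _ hl] at hsum
  field_simp at hsum ⊢
  linarith

lemma isWaterFilling_pushDown (hc' : IsWaterFilling lam (α + 1) c') (hlam : ∀ l, 0 ≤ lam l)
    (hα : 1 ≤ α) (hG' : 0 < waterLevel lam (α + 1)) :
    IsWaterFilling lam α (pushDown c' (pushDownWeight lam α)) := by
  refine ⟨fun U hU => sum_nonneg fun x hx => mul_nonneg (hc'.nonneg _ ?_)
    (pushDownWeight_nonneg hlam hα x), fun l => ?_⟩
  · rw [mem_OmegaL, card_insert_of_notMem (mem_compl.1 hx), mem_OmegaL.1 hU]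
  · rw [sum_filter_mem_pushDown, ← min_waterLevel_succ_mul_one_add_levelGain hlam hα hG',
      ← hc'.sum_filter_mem l, sum_mul]
    refine sum_congr rfl fun V hV => ?_
    rw [mem_filter] at hV
    rcases eq_or_ne (c' V) 0 with h | h
    · simp [h]
    · rw [hc'.sum_erase_pushDownWeight hlam hα hG' hV.1 h hV.2]

lemma exists_lower_level (hc' : IsWaterFilling lam (α + 1) c') (hlam : ∀ l, 0 ≤ lam l)
    (hα : 1 ≤ α) :
    ∃ c, IsWaterFilling lam α c ∧ ∀ g : Finset (Fin L) → ℝ, IsPolymatroid g →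
      ∑ V ∈ OmegaL L (α + 1), c' V * g V ≤ ∑ U ∈ OmegaL L α, c U * g U := by
  rcases (waterLevel_nonneg hlam (α := α + 1) (by omega)).eq_or_lt with hG' | hG'
  · obtain ⟨c, hc⟩ := exists_isWaterFilling_of_waterLevel_succ_eq_zero hlam hα hG'.symm
    have hc'0 : ∀ V ∈ OmegaL L (α + 1), c' V = 0 :=
      (sum_eq_zero_iff_of_nonneg hc'.nonneg).1 (by rw [hc'.sum_eq hlam (by omega), ← hG'])
    refine ⟨c, hc, fun g hg => ?_⟩
    rw [sum_eq_zero fun V hV => by rw [hc'0 V hV, zero_mul]]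
    exact sum_nonneg fun U hU => mul_nonneg (hc.nonneg U hU) (hg.nonneg U)
  · refine ⟨_, hc'.isWaterFilling_pushDown hlam hα hG', fun g hg => ?_⟩
    rw [sum_pushDown_mul]
    refine sum_le_sum fun V hV => ?_
    rcases eq_or_ne (c' V) 0 with h | h
    · simp [h]
    · refine mul_le_mul_of_nonneg_left ?_ (hc'.nonneg V hV)
      simpa only [one_mul] using hg.mul_le_sum_mul_erase (τ := 1) V
        (fun x _ => pushDownWeight_nonneg hlam hα x) fun l hl => by
          rw [hc'.sum_erase_pushDownWeight hlam hα hG' hV h hl, le_add_iff_nonneg_right]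
          exact div_nonneg (levelGain_nonneg hlam hα l) hG'.le

end IsWaterFilling

variable (lam) in
def IsWaterFillingChainAt (c : ℕ → Finset (Fin L) → ℝ) (α : ℕ) : Prop :=
  IsWaterFilling lam α (c α) ∧ ∀ g : Finset (Fin L) → ℝ, IsPolymatroid g →
    ∑ V ∈ OmegaL L (α + 1), c (α + 1) V * g V ≤ ∑ U ∈ OmegaL L α, c α U * g U

lemma exists_isWaterFillingChainAt (hlam : ∀ l, 0 ≤ lam l) :
    ∃ c, ∀ α, 1 ≤ α → α ≤ L → IsWaterFillingChainAt lam c α := by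
  refine (Nat.decreasingInduction' (m := 0) (n := L)
    (P := fun n =>
      ∃ c, ∀ α, n ≤ α → 1 ≤ α → α ≤ L → IsWaterFillingChainAt lam c α)
    (fun n hn _ ⟨c, hc⟩ => ?_) (Nat.zero_le L) ?_).imp fun c hc α => hc α (Nat.zero_le α)
  · rcases Nat.eq_zero_or_pos n with rfl | hn0
    · exact ⟨c, fun α _ h1 => hc α h1 h1⟩
    obtain ⟨cn, hcn, hchain⟩ :=
      (hc (n + 1) le_rfl (by omega) hn).1.exists_lower_level hlam hn0
    refine ⟨Function.update c n cn, fun α hnα h1 hαL => ?_⟩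
    rcases hnα.eq_or_lt with rfl | hlt
    · simpa [IsWaterFillingChainAt, Function.update_of_ne (Nat.succ_ne_self _)] using
        ⟨hcn, hchain⟩
    · unfold IsWaterFillingChainAt
      rw [Function.update_of_ne hlt.ne', Function.update_of_ne (by omega)]
      exact hc α hlt h1 hαL
  · refine ⟨fun _ => Pi.single univ (waterLevel lam L), fun α hLα h1 hαL => ?_⟩
    obtain rfl : α = L := le_antisymm hαL hLα
    have hc := isWaterFilling_single hlam h1 (P := univ) (by simp) (by simp)
    refine ⟨hc, fun g hg => ?_⟩
    rw [show OmegaL α (α + 1) = ∅ from powersetCard_eq_empty.2 (by simp), sum_empty]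
    exact sum_nonneg fun U hU => mul_nonneg (hc.nonneg U hU) (hg.nonneg U)

end LinearProgram

section Sources

variable {Ω : Type*} [MeasurableSpace Ω] {μ : Measure Ω} {L : ℕ}
  {T : Fin L → Type*} [∀ i, Fintype (T i)] {S : ∀ i, Ω → T i}
  {V : Fin L → Type*} [∀ i, Fintype (V i)] {X : ∀ i, Ω → V i}
  {lam : Fin L → ℝ} {c : ℕ → Finset (Fin L) → ℝ}

lemma condEntH_jointOn_pre_zero [IsProbabilityMeasure μ] {A : Type*} [Fintype A] (Y : Ω → A) :
    condEntH μ Y (jointOn S (pre L 0)) = entH μ Y := by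
  have : IsEmpty (pre L 0) := ⟨fun j => by simpa [pre] using j.2⟩
  exact condEntH_of_subsingleton Y _

variable (μ S X) in
noncomputable def weightedCondEntH (c : ℕ → Finset (Fin L) → ℝ) (n : ℕ) : ℝ :=
  ∑ U ∈ OmegaL L (n + 1), c (n + 1) U * condEntH μ (jointOn X U) (jointOn S (pre L n))

lemma weightedCondEntH_self (c : ℕ → Finset (Fin L) → ℝ) :
    weightedCondEntH μ S X c L = 0 := by
  simp [weightedCondEntH, show OmegaL L (L + 1) = ∅ from powersetCard_eq_empty.2 (by simp)]

lemma weightedCondEntH_zero_le [IsProbabilityMeasure μ]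
    (hc : ∀ α, 1 ≤ α → α ≤ L → IsWaterFillingChainAt lam c α) :
    weightedCondEntH μ S X c 0 ≤ ∑ l, lam l * entH μ (X l) := by
  simp only [weightedCondEntH, zero_add, OmegaL, powersetCard_one, sum_map]
  refine sum_le_sum fun l _ => ?_
  rw [Function.Embedding.coeFn_mk, condEntH_jointOn_pre_zero, entH_jointOn_singleton]
  exact mul_le_mul_of_nonneg_right ((hc 1 le_rfl l.pos).1.le_of_mem (by simp)
    (mem_singleton_self l)) (entH_nonneg _)

variable [IsProbabilityMeasure μ] [∀ i, MeasurableSpace (T i)]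
  [∀ i, MeasurableSingletonClass (T i)] [∀ i, MeasurableSpace (V i)]
  [∀ i, MeasurableSingletonClass (V i)]

lemma entH_sub_condEntH_add_condEntH_pre_succ_le (hS : ∀ i, Measurable (S i))
    (hindep : iIndepFun S μ) (hX : ∀ i, Measurable (X i)) (i : Fin L) (U : Finset (Fin L)) :
    entH μ (S i) - condEntH μ (jointOn S (pre L (i + 1))) (jointOn X U) +
        condEntH μ (jointOn X U) (jointOn S (pre L (i + 1))) ≤
      condEntH μ (jointOn X U) (jointOn S (pre L i)) := by
  have hi : i ∈ pre L (i + 1) := by simp [pre]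
  have hsub : pre L i ⊆ pre L (i + 1) := fun j hj => by simp [pre] at hj ⊢; omega
  -- `S_{< i+1}` is `(S i, S_{< i})` up to relabelling
  set e : ((j : pre L (i + 1)) → T j) → T i × ((j : pre L i) → T j) :=
    fun f => (f ⟨i, hi⟩, Finset.restrict₂ hsub f)
  have he : e.Injective := by
    intro f f' h
    simp only [e, Prod.mk.injEq] at h
    funext ⟨j, hj⟩
    rcases eq_or_ne j i with rfl | hji
    · exact h.1
    · have hj' : j ∈ pre L i := by simp [pre] at hj ⊢; omega
      exact congrFun h.2 ⟨j, hj'⟩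
  have hind : IndepFun (S i) (jointOn S (pre L i)) μ :=
    (hindep.indepFun_finset {i} (pre L i) (by simp [pre]) hS).comp
      (measurable_pi_apply (⟨i, mem_singleton_self i⟩ : ({i} : Finset (Fin L)))) measurable_id
  have h := entH_sub_condEntH_add_condEntH_le (hS i) (measurable_jointOn hS (pre L i))
    (measurable_jointOn hX U) hind
  have hleft : condEntH μ (fun ω => (S i ω, jointOn S (pre L i) ω)) (jointOn X U) =
      condEntH μ (jointOn S (pre L (i + 1))) (jointOn X U) :=
    by
      have h := condEntH_comp_left (μ := μ) (jointOn S (pre L (i + 1))) (jointOn X U) he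
      exact h
  have hright : condEntH μ (jointOn X U) (fun ω => (S i ω, jointOn S (pre L i) ω)) =
      condEntH μ (jointOn X U) (jointOn S (pre L (i + 1))) :=
    by
      have h := condEntH_comp_right (μ := μ) (jointOn X U) (jointOn S (pre L (i + 1))) he
      exact h
  rwa [hleft, hright] at h

lemma fLP_mul_sub_le_weightedCondEntH_sub {i : Fin L} (hc : IsWaterFillingChainAt lam c (i + 1))
    (hlam : ∀ l, 0 ≤ lam l) (hS : ∀ i, Measurable (S i)) (hindep : iIndepFun S μ)
    (hX : ∀ i, Measurable (X i)) {δ : ℝ}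
    (hrec : ∀ U ∈ OmegaL L (i + 1),
      condEntH μ (jointOn S (pre L (i + 1))) (jointOn X U) ≤ δ) :
    fLP L lam (i + 1) * (entH μ (S i) - δ) ≤
      weightedCondEntH μ S X c i - weightedCondEntH μ S X c (i + 1) := by
  set g := fun (n : ℕ) U => condEntH μ (jointOn X U) (jointOn S (pre L n))
  have hpeel : ∀ U ∈ OmegaL L (i + 1), c (i + 1) U * (entH μ (S i) - δ) ≤
      c (i + 1) U * (g i U - g (i + 1) U) := fun U hU => mul_le_mul_of_nonneg_left
    (by linarith [hrec U hU, entH_sub_condEntH_add_condEntH_pre_succ_le hS hindep hX i U])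
    (hc.1.nonneg U hU)
  calc fLP L lam (i + 1) * (entH μ (S i) - δ)
      = ∑ U ∈ OmegaL L (i + 1), c (i + 1) U * (entH μ (S i) - δ) := by
        rw [hc.1.fLP_eq hlam (by omega), sum_mul]
    _ ≤ ∑ U ∈ OmegaL L (i + 1), c (i + 1) U * (g i U - g (i + 1) U) := sum_le_sum hpeel
    _ = weightedCondEntH μ S X c i - ∑ U ∈ OmegaL L (i + 1), c (i + 1) U * g (i + 1) U := by
        simp only [mul_sub, sum_sub_distrib]
        rfl
    _ ≤ weightedCondEntH μ S X c i - weightedCondEntH μ S X c (i + 1) :=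
        sub_le_sub_left (hc.2 _ (isPolymatroid_condEntH_jointOn (μ := μ) hX
          (measurable_jointOn hS (pre L (i + 1))))) _

end Sources

/-- The source index `i : Fin L` is the paper's `α = i + 1`. -/
theorem smdc_converse_hyperplane_general
    {Ω : Type*} [MeasurableSpace Ω] (μ : Measure Ω) [IsProbabilityMeasure μ]
    {L : ℕ} (lam : Fin L → ℝ) (hlam : ∀ l, 0 ≤ lam l)
    {T : Fin L → Type*} [∀ i, Fintype (T i)] [∀ i, MeasurableSpace (T i)]
    [∀ i, MeasurableSingletonClass (T i)]
    {V : Fin L → Type*} [∀ i, Fintype (V i)] [∀ i, MeasurableSpace (V i)]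
    [∀ i, MeasurableSingletonClass (V i)]
    (S : ∀ i, Ω → T i) (hS : ∀ i, Measurable (S i))
    (hindep : iIndepFun S μ)
    (X : ∀ i, Ω → V i) (hX : ∀ i, Measurable (X i))
    (δ : Fin L → ℝ)
    (hrec : ∀ i : Fin L, ∀ U ∈ OmegaL L ((i : ℕ) + 1),
      condEntH μ (jointOn S (pre L ((i : ℕ) + 1))) (jointOn X U) ≤ δ i) :
    ∑ l : Fin L, lam l * entH μ (X l) ≥
      ∑ i : Fin L, fLP L lam ((i : ℕ) + 1) * entH μ (S i) -
        ∑ i : Fin L, fLP L lam ((i : ℕ) + 1) * δ i := by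
  obtain ⟨c, hc⟩ := exists_isWaterFillingChainAt hlam
  set w := weightedCondEntH μ S X c
  calc ∑ i : Fin L, fLP L lam (i + 1) * entH μ (S i) - ∑ i : Fin L, fLP L lam (i + 1) * δ i
      = ∑ i : Fin L, fLP L lam (i + 1) * (entH μ (S i) - δ i) := by
        simp only [mul_sub, sum_sub_distrib]
    _ ≤ ∑ i : Fin L, (w i - w (i + 1)) := sum_le_sum fun i _ =>
        fLP_mul_sub_le_weightedCondEntH_sub (hc (i + 1) (by omega) i.isLt) hlam hS hindep hX
          (hrec i)
    _ = w 0 := by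
        rw [Fin.sum_univ_eq_sum_range (fun i => w i - w (i + 1)), sum_range_sub',
          show w L = 0 from weightedCondEntH_self c, sub_zero]
    _ ≤ ∑ l, lam l * entH μ (X l) := weightedCondEntH_zero_le hc

/-- **Converse bound for classical SMDC along an arbitrary supporting hyperplane**:
if `H(S_1,…,S_α | X_U) ≤ δ_α` for every `α ∈ {1,…,L}` and every `U ∈ Ω_L^{(α)}`, then
`∑_l λ_l H(X_l) ≥ ∑_α f_α(λ) H(S_α) − ∑_α f_α(λ) δ_α`.  Here the source index `i : Fin L`
corresponds to the paper's index `α = i + 1`. -/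
theorem smdc_converse_hyperplane
    {Ω : Type*} [MeasurableSpace Ω] (μ : Measure Ω) [IsProbabilityMeasure μ]
    {L : ℕ} (hL : 1 ≤ L) (lam : Fin L → ℝ) (hlam : ∀ l, 0 ≤ lam l)
    {T : Fin L → Type*} [∀ i, Fintype (T i)] [∀ i, MeasurableSpace (T i)]
    [∀ i, MeasurableSingletonClass (T i)]
    {V : Fin L → Type*} [∀ i, Fintype (V i)] [∀ i, MeasurableSpace (V i)]
    [∀ i, MeasurableSingletonClass (V i)]
    (S : ∀ i, Ω → T i) (hS : ∀ i, Measurable (S i))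
    (hindep : iIndepFun S μ)
    (X : ∀ i, Ω → V i) (hX : ∀ i, Measurable (X i))
    (δ : Fin L → ℝ) (hδ : ∀ i, 0 ≤ δ i)
    (hrec : ∀ i : Fin L, ∀ U ∈ OmegaL L ((i : ℕ) + 1),
      condEntH μ (jointOn S (pre L ((i : ℕ) + 1))) (jointOn X U) ≤ δ i) :
    ∑ l : Fin L, lam l * entH μ (X l) ≥
      ∑ i : Fin L, fLP L lam ((i : ℕ) + 1) * entH μ (S i) -
        ∑ i : Fin L, fLP L lam ((i : ℕ) + 1) * δ i :=
  smdc_converse_hyperplane_general μ lam hlam S hS hindep X hX δ hrec
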